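/- Let ω be a tempered distribution on ℝ^d whose Fourier transform ω̂ = f·λ is an absolutely continuous translation bounded measure with density f ∈ L¹_loc(ℝ^d). Then for every Schwartz function g on ℝ^d, the product ĝ·f lies in L¹(ℝ^d), and consequently g * ω ∈ C_0(ℝ^d), i.e. g * ω is continuous and vanishes at infinity. -/

import Mathlib

/-!
Translation boundedness says that `f` has uniformly bounded mass `M` on unit balls. Averaging
`|φ f|` over all translates of the unit ball (Tonelli) bounds `∫ |φ f|` by `M` times the integral
of `t ↦ sup_{B(t,1)} |φ|`, which is finite for the rapidly decreasing `φ = ĝ`.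

For the convolution, `ω ψ = ∫ 𝓕⁻ψ · f` and `𝓕⁻(g(x - ·))(ξ) = e^{2πi⟨x,ξ⟩} ĝ(ξ)` give
`(g * ω)(x) = 𝓕⁻(ĝ f)(x)`, the inverse Fourier transform of an integrable function, which is
continuous and vanishes at infinity by Riemann–Lebesgue.
-/

open Real MeasureTheory SchwartzMap Filter
open scoped FourierTransform RealInnerProductSpace ENNReal
open Metric Module Topology

section TranslationBounded

variable {E : Type*} [NormedAddCommGroup E] [MeasurableSpace E] [BorelSpace E]
  (μ : Measure E) [μ.IsAddHaarMeasure]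

theorem lintegral_mul_measure_closedBall [ProperSpace E] {G : E → ℝ≥0∞} (hG : AEMeasurable G μ)
    (r : ℝ) :
    (∫⁻ y, G y ∂μ) * μ (closedBall 0 r) = ∫⁻ t, ∫⁻ y in closedBall t r, G y ∂μ ∂μ := by
  have hS : MeasurableSet {p : E × E | dist p.2 p.1 ≤ r} :=
    (isClosed_le (continuous_snd.dist continuous_fst) continuous_const).measurableSet
  calc (∫⁻ y, G y ∂μ) * μ (closedBall 0 r)
      = ∫⁻ y, ∫⁻ t, (closedBall y r).indicator (fun _ ↦ G y) t ∂μ ∂μ := by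
        rw [← lintegral_mul_const'' _ hG]
        refine lintegral_congr fun y ↦ ?_
        rw [lintegral_indicator_const measurableSet_closedBall, μ.addHaar_closedBall_center y]
    _ = ∫⁻ t, ∫⁻ y, (closedBall y r).indicator (fun _ ↦ G y) t ∂μ ∂μ :=
        lintegral_lintegral_swap (hG.comp_fst.indicator hS)
    _ = ∫⁻ t, ∫⁻ y in closedBall t r, G y ∂μ ∂μ := by
        refine lintegral_congr fun t ↦ ?_
        rw [← lintegral_indicator measurableSet_closedBall]
        congr 1 with y
        simp only [Set.indicator, mem_closedBall, dist_comm]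

theorem integrable_mul_of_iSup_lintegral_closedBall_lt_top [ProperSpace E] {𝕜 : Type*}
    [NormedRing 𝕜] {φ f : E → 𝕜} (hφ : AEStronglyMeasurable φ μ)
    (hf : AEStronglyMeasurable f μ) (hfM : ⨆ t, ∫⁻ x in closedBall t 1, ‖f x‖ₑ ∂μ < ⊤)
    {B : E → ℝ} (hB : Integrable B μ) (hφB : ∀ t, ∀ y ∈ closedBall t 1, ‖φ y‖ ≤ B t) :
    Integrable (fun y ↦ φ y * f y) μ := by
  set M := ⨆ t, ∫⁻ x in closedBall t 1, ‖f x‖ₑ ∂μ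
  have hlocal (t : E) : ∫⁻ y in closedBall t 1, ‖φ y‖ₑ * ‖f y‖ₑ ∂μ ≤ ‖B t‖ₑ * M :=
    calc ∫⁻ y in closedBall t 1, ‖φ y‖ₑ * ‖f y‖ₑ ∂μ
        ≤ ∫⁻ y in closedBall t 1, ‖B t‖ₑ * ‖f y‖ₑ ∂μ := by
          refine setLIntegral_mono' measurableSet_closedBall fun y hy ↦ ?_
          gcongr
          exact enorm_le_iff_norm_le.2 ((hφB t y hy).trans (le_norm_self _))
      _ = ‖B t‖ₑ * ∫⁻ y in closedBall t 1, ‖f y‖ₑ ∂μ := lintegral_const_mul' _ _ enorm_ne_top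
      _ ≤ ‖B t‖ₑ * M := by gcongr; exact le_iSup (fun t ↦ ∫⁻ x in closedBall t 1, ‖f x‖ₑ ∂μ) t
  have hc : μ (closedBall 0 1) ≠ 0 := (measure_closedBall_pos μ 0 one_pos).ne'
  have hfin : (∫⁻ y, ‖φ y‖ₑ * ‖f y‖ₑ ∂μ) * μ (closedBall 0 1) < ⊤ :=
    calc (∫⁻ y, ‖φ y‖ₑ * ‖f y‖ₑ ∂μ) * μ (closedBall 0 1)
        = ∫⁻ t, ∫⁻ y in closedBall t 1, ‖φ y‖ₑ * ‖f y‖ₑ ∂μ ∂μ :=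
          lintegral_mul_measure_closedBall μ (hφ.enorm.mul hf.enorm) 1
      _ ≤ ∫⁻ t, ‖B t‖ₑ * M ∂μ := lintegral_mono hlocal
      _ = (∫⁻ t, ‖B t‖ₑ ∂μ) * M := lintegral_mul_const' _ _ hfM.ne
      _ < ⊤ := ENNReal.mul_lt_top hB.2 hfM
  refine ⟨hφ.mul hf, ?_⟩
  calc ∫⁻ y, ‖φ y * f y‖ₑ ∂μ ≤ ∫⁻ y, ‖φ y‖ₑ * ‖f y‖ₑ ∂μ := lintegral_mono fun y ↦ by
          simpa [enorm, ← ENNReal.coe_mul] using nnnorm_mul_le (φ y) (f y)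
    _ < ⊤ := ENNReal.lt_top_of_mul_ne_top_left hfin.ne hc

end TranslationBounded

theorem one_add_norm_rpow_neg_le_of_dist_le_one {E : Type*} [SeminormedAddCommGroup E]
    {x y : E} (hxy : dist x y ≤ 1) {r : ℝ} (hr : 0 ≤ r) :
    (1 + ‖x‖) ^ (-r) ≤ 2 ^ r * (1 + ‖y‖) ^ (-r) := by
  have hyx : 2⁻¹ * (1 + ‖y‖) ≤ 1 + ‖x‖ := by
    have := norm_le_norm_add_norm_sub' y x
    rw [norm_sub_rev, ← dist_eq_norm] at this
    linarith [norm_nonneg x]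
  calc (1 + ‖x‖) ^ (-r) ≤ (2⁻¹ * (1 + ‖y‖)) ^ (-r) :=
        rpow_le_rpow_of_nonpos (by positivity) hyx (neg_nonpos.2 hr)
    _ = 2 ^ r * (1 + ‖y‖) ^ (-r) := by
        rw [mul_rpow (by norm_num) (by positivity), inv_rpow (by norm_num), rpow_neg (by norm_num),
          inv_inv]

theorem SchwartzMap.exists_norm_le_mul_one_add_norm_rpow_neg {E F : Type*}
    [NormedAddCommGroup E] [NormedSpace ℝ E] [NormedAddCommGroup F] [NormedSpace ℝ F]
    (φ : 𝓢(E, F)) (k : ℕ) :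
    ∃ C, 0 ≤ C ∧ ∀ x, ‖φ x‖ ≤ C * (1 + ‖x‖) ^ (-(k : ℝ)) := by
  refine ⟨2 ^ k * (Finset.Iic (k, 0)).sup (fun m ↦ SchwartzMap.seminorm ℝ m.1 m.2) φ,
    by positivity, fun x ↦ ?_⟩
  rw [rpow_neg (by positivity), ← div_eq_mul_inv, le_div_iff₀ (by positivity), rpow_natCast,
    mul_comm]
  simpa using one_add_le_sup_seminorm_apply (m := (k, 0)) (k := k) (n := 0) le_rfl le_rfl φ x

theorem SchwartzMap.integrable_mul_of_iSup_lintegral_closedBall_lt_top {E 𝕜 : Type*}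
    [NormedAddCommGroup E] [NormedSpace ℝ E] [FiniteDimensional ℝ E] [MeasurableSpace E]
    [BorelSpace E] {μ : Measure E} [μ.IsAddHaarMeasure] [NormedRing 𝕜] [NormedSpace ℝ 𝕜]
    (φ : 𝓢(E, 𝕜)) {f : E → 𝕜} (hf : AEStronglyMeasurable f μ)
    (hfM : ⨆ t, ∫⁻ x in closedBall t 1, ‖f x‖ₑ ∂μ < ⊤) :
    Integrable (fun y ↦ φ y * f y) μ := by
  set r : ℝ := ((finrank ℝ E + 1 : ℕ) : ℝ)
  obtain ⟨C, hC, hφC⟩ := φ.exists_norm_le_mul_one_add_norm_rpow_neg (finrank ℝ E + 1)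
  refine _root_.integrable_mul_of_iSup_lintegral_closedBall_lt_top μ
    φ.continuous.aestronglyMeasurable hf hfM
    ((integrable_one_add_norm (r := r) (by simp [r])).const_mul (C * 2 ^ r))
    fun t y hy ↦ ?_
  calc ‖φ y‖ ≤ C * (1 + ‖y‖) ^ (-r) := hφC y
    _ ≤ C * (2 ^ r * (1 + ‖t‖) ^ (-r)) := by
        gcongr
        exact one_add_norm_rpow_neg_le_of_dist_le_one hy (by positivity)
    _ = C * 2 ^ r * (1 + ‖t‖) ^ (-r) := by ring

section Fourier

variable {V E : Type*} [NormedAddCommGroup V] [InnerProductSpace ℝ V] [FiniteDimensional ℝ V]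
  [MeasurableSpace V] [BorelSpace V] [NormedAddCommGroup E] [NormedSpace ℂ E]
  {ω : 𝓢(V, ℂ) → ℂ} {f : V → ℂ}

theorem Real.fourierInv_comp_sub_left (g : V → E) (x ξ : V) :
    𝓕⁻ (fun y ↦ g (x - y)) ξ = 𝐞 ⟪x, ξ⟫ • 𝓕 g ξ := by
  rw [fourierInv_eq, fourier_eq, ← integral_sub_left_eq_self _ volume x]
  simp_rw [sub_sub_cancel, inner_sub_left, sub_eq_add_neg, AddChar.map_add_eq_mul, mul_smul,
    Circle.smul_def (𝐞 ⟪x, ξ⟫)]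
  exact integral_smul _ _

theorem Real.continuous_fourierInv {h : V → E} (hh : Integrable h) : Continuous (𝓕⁻ h) :=
  VectorFourier.fourierIntegral_continuous Real.continuous_fourierChar
    (continuous_inner (𝕜 := ℝ) (E := V)).neg hh

theorem Real.tendsto_fourierInv_cocompact (h : V → E) :
    Tendsto (𝓕⁻ h) (cocompact V) (𝓝 0) := by
  rw [fourierInv_eq_fourier_comp_neg]
  exact tendsto_integral_exp_inner_smul_cocompact _

theorem apply_eq_integral_fourierInv_mul
    (hFT : ∀ φ : 𝓢(V, ℂ), ω (fourierTransformCLM ℂ φ) = ∫ x, φ x * f x) (ψ : 𝓢(V, ℂ)) :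
    ω ψ = ∫ ξ, 𝓕⁻ (ψ : V → ℂ) ξ * f ξ := by
  rw [← fourierInv_coe, ← hFT, fourierTransformCLM_apply, FourierInvPair.fourier_fourierInv_eq]

theorem apply_comp_sub_left_eq_fourierInv_mul
    (hFT : ∀ φ : 𝓢(V, ℂ), ω (fourierTransformCLM ℂ φ) = ∫ x, φ x * f x) {g gₓ : 𝓢(V, ℂ)} {x : V}
    (hgₓ : ∀ y, gₓ y = g (x - y)) :
    ω gₓ = 𝓕⁻ (fun ξ ↦ 𝓕 (g : V → ℂ) ξ * f ξ) x := by
  rw [apply_eq_integral_fourierInv_mul hFT, fourierInv_eq, show ⇑gₓ = fun y ↦ g (x - y) from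
    funext hgₓ]
  simp_rw [Real.fourierInv_comp_sub_left, smul_mul_assoc, real_inner_comm x]

end Fourier

/-- Proposition 5.3: let `ω` be a tempered distribution on `ℝ^d` whose Fourier transform is the
absolutely continuous translation bounded measure `f·λ`. Then for every Schwartz function `g`,
`ĝ·f ∈ L¹(ℝ^d)`, and the convolution `g * ω : x ↦ ω(g(x − ·))` is in `C₀(ℝ^d)`. -/
theorem stmt9 (d : ℕ)
    (ω : SchwartzMap (EuclideanSpace ℝ (Fin d)) ℂ →L[ℂ] ℂ)
    (f : EuclideanSpace ℝ (Fin d) → ℂ) (hloc : LocallyIntegrable f volume)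
    (hTB : ∀ K : Set (EuclideanSpace ℝ (Fin d)), IsCompact K →
      (⨆ t : EuclideanSpace ℝ (Fin d),
        ∫⁻ x in (fun x => t + x) '' K, ‖f x‖₊ ∂volume) < ⊤)
    (hFT : ∀ φ : SchwartzMap (EuclideanSpace ℝ (Fin d)) ℂ,
      ω (SchwartzMap.fourierTransformCLM ℂ φ) = ∫ x, φ x * f x)
    (g : SchwartzMap (EuclideanSpace ℝ (Fin d)) ℂ) :
    Integrable (fun y => (SchwartzMap.fourierTransformCLM ℂ g) y * f y) volume ∧
    ∀ F : EuclideanSpace ℝ (Fin d) → ℂ,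
      (∀ x, ∃ gx : SchwartzMap (EuclideanSpace ℝ (Fin d)) ℂ,
        (∀ y, gx y = g (x - y)) ∧ F x = ω gx) →
      Continuous F ∧ Tendsto F (cocompact (EuclideanSpace ℝ (Fin d))) (nhds 0) := by
  have hfM : ⨆ t, ∫⁻ x in closedBall t 1, ‖f x‖ₑ < ⊤ := by
    simpa [vadd_closedBall_zero, enorm_eq_nnnorm] using
      hTB (closedBall 0 1) (isCompact_closedBall 0 1)
  have hInt : Integrable (fun ξ ↦ 𝓕 (g : _ → ℂ) ξ * f ξ) :=
    (𝓕 g).integrable_mul_of_iSup_lintegral_closedBall_lt_top hloc.aestronglyMeasurable hfM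
  refine ⟨hInt, fun F hF ↦ ?_⟩
  have hF_eq : F = 𝓕⁻ (fun ξ ↦ 𝓕 (g : _ → ℂ) ξ * f ξ) := funext fun x ↦ by
    obtain ⟨gₓ, hgₓ, hFx⟩ := hF x
    rw [hFx, apply_comp_sub_left_eq_fourierInv_mul hFT hgₓ]
  rw [hF_eq]
  exact ⟨Real.continuous_fourierInv hInt, Real.tendsto_fourierInv_cocompact _⟩
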